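/- arXiv:1408.5339 — 5 statements merged into one kernel-verified Lean document; each statement's English description precedes it below -/
import Mathlib

section
/- Fix δ ∈ (0, 1/2) and constants C₁ > 0 and c₂ > 0. There exists a constant k > 0, depending only on C₁, c₂ and δ, such that for every real M ≥ 1 and every twice continuously differentiable function R : [δ, 1−δ] → ℝ satisfying ∫_δ^{1−δ} (R″(t))² dt ≤ C₁ M² and ∫_δ^{1−δ} (R′(t))² dt ≥ c₂, one has ∫_δ^{1−δ} (R(t))² dt ≥ k M⁻². -/
/-!
On an interval of length `h`, the mean value theorem for integrals yields points `u, v` in the two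
outer thirds with `f(u)², f(v)² ≤ (3/h) ∫ f²`, the mean value theorem yields a point between them
where `|f'| ≤ 3 (|f u| + |f v|) / h`, and by Cauchy–Schwarz `f'` oscillates by at most
`(h ∫ f''²)^(1/2)`. Hence `∫ f'² ≤ C h⁻² ∫ f² + C' h² ∫ f''²`. Summed over a uniform partition of an
interval of length `A` into pieces of length `h ≤ √ε`, this gives the Halperin–Pitt inequality
`∫ f'² ≤ C (1/ε + 1/A²) ∫ f² + C' ε ∫ f''²`; with `ε ~ M⁻²` the `R''` term is at most `c₂ / 2`, so
`∫ R² ≳ c₂ M⁻²`.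
-/

open MeasureTheory Set

theorem sq_intervalIntegral_le_mul_integral_sq {g : ℝ → ℝ} {a b : ℝ} (hab : a ≤ b)
    (hg : IntervalIntegrable g volume a b)
    (hg2 : IntervalIntegrable (fun x => g x ^ 2) volume a b) :
    (∫ x in a..b, g x) ^ 2 ≤ (b - a) * ∫ x in a..b, g x ^ 2 := by
  rcases hab.eq_or_lt with rfl | hab
  · simp
  have : NeZero (volume.restrict (Ioc a b)) := ⟨by simp [Measure.restrict_eq_zero, hab]⟩
  have jensen := (even_two.convexOn_pow (𝕜 := ℝ)).map_average_le (μ := volume.restrict (Ioc a b))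
    (continuousOn_pow 2) isClosed_univ (by simp) hg.1 hg2.1
  have hba : 0 < b - a := sub_pos.2 hab
  rw [setAverage_eq, setAverage_eq, Real.volume_real_Ioc_of_le hab.le,
    ← intervalIntegral.integral_of_le hab.le, ← intervalIntegral.integral_of_le hab.le,
    smul_eq_mul, smul_eq_mul, mul_pow, inv_pow, inv_mul_le_iff₀ (by positivity)] at jensen
  calc _ ≤ (b - a) ^ 2 * ((b - a)⁻¹ * ∫ x in a..b, g x ^ 2) := jensen
    _ = _ := by field_simp

theorem intervalIntegral_le_of_le_on_uniform_partition {F G : ℝ → ℝ} {a b h : ℝ} {n : ℕ}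
    (hh : 0 ≤ h) (hn : a + n * h = b) (hF : IntervalIntegrable F volume a b)
    (hG : IntervalIntegrable G volume a b)
    (hloc : ∀ s, a ≤ s → s + h ≤ b → ∫ x in s..s + h, F x ≤ ∫ x in s..s + h, G x) :
    ∫ x in a..b, F x ≤ ∫ x in a..b, G x := by
  let pts : ℕ → ℝ := fun j => a + j * h
  have hmem : ∀ j ≤ n, pts j ∈ Icc a b := by
    intro j hj
    have : (j : ℝ) * h ≤ n * h := by gcongr
    exact ⟨le_add_of_nonneg_right (by positivity), by simp only [pts]; linarith⟩
  have hpiece : ∀ j < n, uIcc (pts j) (pts (j + 1)) ⊆ uIcc a b := fun j hj =>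
    uIcc_subset_uIcc (Icc_subset_uIcc (hmem j hj.le)) (Icc_subset_uIcc (hmem (j + 1) hj))
  have sum_eq : ∀ H : ℝ → ℝ, IntervalIntegrable H volume a b →
      ∑ j ∈ Finset.range n, ∫ x in pts j..pts (j + 1), H x = ∫ x in a..b, H x := by
    intro H hH
    rw [intervalIntegral.sum_integral_adjacent_intervals
      (fun j hj => hH.mono_set (hpiece j hj))]
    simp [pts, hn]
  have hsucc : ∀ j, pts (j + 1) = pts j + h := fun j => by simp only [pts]; push_cast; ring
  rw [← sum_eq F hF, ← sum_eq G hG]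
  refine Finset.sum_le_sum fun j hj => ?_
  have hj := Finset.mem_range.1 hj
  rw [hsucc]
  exact hloc _ (hmem j hj.le).1 (hsucc j ▸ (hmem (j + 1) hj).2)

section
variable {f f' f'' : ℝ → ℝ} {a b : ℝ}

theorem integral_eq_sub_of_hasDerivWithinAt_Icc {u v : ℝ}
    (hf : ∀ t ∈ Icc a b, HasDerivWithinAt f (f' t) (Icc a b) t)
    (hf' : IntervalIntegrable f' volume u v) (hu : u ∈ Icc a b) (hv : v ∈ Icc a b) :
    ∫ t in u..v, f' t = f v - f u := by
  have hsub : uIcc u v ⊆ Icc a b := uIcc_subset_Icc hu hv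
  refine intervalIntegral.integral_eq_sub_of_hasDeriv_right
    (fun t ht => (hf t (hsub ht)).continuousWithinAt.mono hsub) (fun t ht => ?_) hf'
  have ht : t ∈ Ioo a b := ⟨(le_min hu.1 hv.1).trans_lt ht.1, ht.2.trans_le (max_le hu.2 hv.2)⟩
  exact ((hf t (Ioo_subset_Icc_self ht)).hasDerivAt (Icc_mem_nhds ht.1 ht.2)).hasDerivWithinAt

theorem sq_sub_le_mul_integral_sq_deriv {x y : ℝ}
    (hf : ∀ t ∈ Icc a b, HasDerivWithinAt f (f' t) (Icc a b) t)
    (hf' : ContinuousOn f' (Icc a b)) (hx : x ∈ Icc a b) (hy : y ∈ Icc a b) :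
    (f x - f y) ^ 2 ≤ (b - a) * ∫ t in a..b, f' t ^ 2 := by
  wlog hyx : y ≤ x generalizing x y
  · rw [← neg_sub, neg_sq]; exact this hy hx (le_of_not_ge hyx)
  have hab : a ≤ b := hx.1.trans hx.2
  have hint : ∀ {g : ℝ → ℝ}, ContinuousOn g (Icc a b) → IntervalIntegrable g volume y x :=
    fun hg => (hg.mono (uIcc_subset_Icc hy hx)).intervalIntegrable
  calc (f x - f y) ^ 2 = (∫ t in y..x, f' t) ^ 2 := by
        rw [integral_eq_sub_of_hasDerivWithinAt_Icc hf (hint hf') hy hx]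
    _ ≤ (x - y) * ∫ t in y..x, f' t ^ 2 :=
        sq_intervalIntegral_le_mul_integral_sq hyx (hint hf') (hint (hf'.pow 2))
    _ ≤ (b - a) * ∫ t in a..b, f' t ^ 2 := by
        refine mul_le_mul (by linarith [hx.2, hy.1]) ?_
          (intervalIntegral.integral_nonneg hyx fun t _ => sq_nonneg _) (by linarith [hx.1, hx.2])
        exact intervalIntegral.integral_mono_interval hy.1 hyx hx.2
          (Filter.Eventually.of_forall fun t => sq_nonneg _)
          ((hf'.pow 2).mono (by rw [uIcc_of_le hab])).intervalIntegrable

theorem exists_sq_deriv_le_integral_sq (hab : a < b)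
    (hf : ∀ t ∈ Icc a b, HasDerivWithinAt f (f' t) (Icc a b) t) :
    ∃ ξ ∈ Icc a b, (b - a) ^ 3 * f' ξ ^ 2 ≤ 108 * ∫ t in a..b, f t ^ 2 := by
  set h := b - a
  have hh0 : 0 < h := sub_pos.2 hab
  have hcont : ContinuousOn f (Icc a b) := fun t ht => (hf t ht).continuousWithinAt
  have hsq : IntervalIntegrable (fun t => f t ^ 2) volume a b :=
    ((hcont.pow 2).mono (by rw [uIcc_of_le hab.le])).intervalIntegrable
  have third : ∀ r, a ≤ r → r + h / 3 ≤ b →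
      ∃ u ∈ Ioo r (r + h / 3), f u ^ 2 * (h / 3) ≤ ∫ t in a..b, f t ^ 2 := by
    intro r har hrb
    have hr : r < r + h / 3 := by linarith
    obtain ⟨u, hu, hmean⟩ := exists_eq_interval_average (f := fun t => f t ^ 2) hr.ne
      ((hcont.pow 2).mono (by rw [uIcc_of_le hr.le]; exact Icc_subset_Icc har hrb))
    rw [uIoo_of_le hr.le] at hu
    refine ⟨u, hu, ?_⟩
    rw [hmean, interval_average_eq_div, add_sub_cancel_left, div_mul_cancel₀ _ (by positivity)]
    exact intervalIntegral.integral_mono_interval har hr.le hrb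
      (Filter.Eventually.of_forall fun t => sq_nonneg _) hsq
  obtain ⟨u, hu, hfu⟩ := third a le_rfl (by linarith)
  obtain ⟨v, hv, hfv⟩ := third (b - h / 3) (by linarith) (by linarith)
  have huv : h / 3 < v - u := by linarith [hu.2, hv.1]
  have hsub : Icc u v ⊆ Icc a b := Icc_subset_Icc hu.1.le (by linarith [hv.2])
  obtain ⟨ξ, hξ, hslope⟩ := exists_hasDerivAt_eq_slope f f' (by linarith) (hcont.mono hsub)
    fun t ht => (hf t (hsub (Ioo_subset_Icc_self ht))).hasDerivAt
      (Icc_mem_nhds (hu.1.trans ht.1) (by linarith [ht.2, hv.2]))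
  refine ⟨ξ, hsub (Ioo_subset_Icc_self hξ), ?_⟩
  have hdiff : (v - u) * f' ξ = f v - f u := by
    have : v - u ≠ 0 := by linarith
    rw [hslope]; field_simp
  have : (h / 3) ^ 2 * f' ξ ^ 2 ≤ 2 * (f u ^ 2 + f v ^ 2) := by
    calc (h / 3) ^ 2 * f' ξ ^ 2 ≤ ((v - u) * f' ξ) ^ 2 := by
          rw [mul_pow]; gcongr
      _ = (f v - f u) ^ 2 := by rw [hdiff]
      _ ≤ 2 * (f u ^ 2 + f v ^ 2) := by nlinarith [sq_nonneg (f u + f v)]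
  nlinarith

theorem integral_sq_deriv_le_length_sq (hab : a < b)
    (hf : ∀ t ∈ Icc a b, HasDerivWithinAt f (f' t) (Icc a b) t)
    (hf' : ∀ t ∈ Icc a b, HasDerivWithinAt f' (f'' t) (Icc a b) t)
    (hf'' : ContinuousOn f'' (Icc a b)) :
    ∫ t in a..b, f' t ^ 2 ≤
      216 / (b - a) ^ 2 * (∫ t in a..b, f t ^ 2) + 2 * (b - a) ^ 2 * ∫ t in a..b, f'' t ^ 2 := by
  obtain ⟨ξ, hξ, hfξ⟩ := exists_sq_deriv_le_integral_sq hab hf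
  have hh : 0 < b - a := sub_pos.2 hab
  have pointwise : ∀ x ∈ Icc a b, f' x ^ 2 ≤
      216 * ((∫ t in a..b, f t ^ 2) / (b - a) ^ 3) + 2 * (b - a) * ∫ t in a..b, f'' t ^ 2 := by
    intro x hx
    have hosc := sq_sub_le_mul_integral_sq_deriv hf' hf'' hx hξ
    have hfξ' : f' ξ ^ 2 ≤ 108 * ((∫ t in a..b, f t ^ 2) / (b - a) ^ 3) := by
      rw [← mul_div_assoc, le_div_iff₀ (by positivity)]; linarith
    calc f' x ^ 2 ≤ 2 * f' ξ ^ 2 + 2 * (f' x - f' ξ) ^ 2 := by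
          nlinarith [sq_nonneg (f' x - 2 * f' ξ)]
      _ ≤ _ := by linarith
  have hcont : ContinuousOn f' (Icc a b) := fun t ht => (hf' t ht).continuousWithinAt
  refine (intervalIntegral.integral_mono_on hab.le
    ((hcont.pow 2).mono (by rw [uIcc_of_le hab.le])).intervalIntegrable
    intervalIntegrable_const pointwise).trans_eq ?_
  rw [intervalIntegral.integral_const, smul_eq_mul]
  field_simp

theorem integral_sq_deriv_le {ε : ℝ} (hab : a < b) (hε : 0 < ε)
    (hf : ∀ t ∈ Icc a b, HasDerivWithinAt f (f' t) (Icc a b) t)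
    (hf' : ∀ t ∈ Icc a b, HasDerivWithinAt f' (f'' t) (Icc a b) t)
    (hf'' : ContinuousOn f'' (Icc a b)) :
    ∫ t in a..b, f' t ^ 2 ≤
      432 * (1 / ε + 1 / (b - a) ^ 2) * (∫ t in a..b, f t ^ 2) +
        2 * ε * ∫ t in a..b, f'' t ^ 2 := by
  set n := ⌈(b - a) / √ε⌉₊
  set h := (b - a) / n
  have hba : 0 < b - a := sub_pos.2 hab
  have hsε : 0 < √ε := Real.sqrt_pos.2 hε
  have hn : 0 < n := Nat.ceil_pos.2 (by positivity)
  have hn' : (0 : ℝ) < n := by exact_mod_cast hn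
  have hh : 0 < h := by positivity
  have hcont : ContinuousOn f (Icc a b) := fun t ht => (hf t ht).continuousWithinAt
  have hcont' : ContinuousOn f' (Icc a b) := fun t ht => (hf' t ht).continuousWithinAt
  have hint : ∀ {g : ℝ → ℝ}, ContinuousOn g (Icc a b) →
      IntervalIntegrable (fun t => g t ^ 2) volume a b :=
    fun hg => ((hg.pow 2).mono (by rw [uIcc_of_le hab.le])).intervalIntegrable
  have hpieces : ∫ t in a..b, f' t ^ 2 ≤
      ∫ t in a..b, (216 / h ^ 2 * f t ^ 2 + 2 * h ^ 2 * f'' t ^ 2) := by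
    refine intervalIntegral_le_of_le_on_uniform_partition hh.le
      (by rw [mul_div_cancel₀ _ hn'.ne']; ring) (hint hcont')
      (((hint hcont).const_mul _).add ((hint hf'').const_mul _)) fun s has hsb => ?_
    have hsub : Icc s (s + h) ⊆ Icc a b := Icc_subset_Icc has hsb
    have hs : s < s + h := by linarith
    have hint' : ∀ {g : ℝ → ℝ}, ContinuousOn g (Icc a b) →
        IntervalIntegrable (fun t => g t ^ 2) volume s (s + h) :=
      fun hg => ((hg.pow 2).mono ((uIcc_of_le hs.le).trans_subset hsub)).intervalIntegrable
    rw [intervalIntegral.integral_add ((hint' hcont).const_mul _) ((hint' hf'').const_mul _),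
      intervalIntegral.integral_const_mul, intervalIntegral.integral_const_mul]
    simpa using integral_sq_deriv_le_length_sq hs (fun x hx => (hf x (hsub hx)).mono hsub)
      (fun x hx => (hf' x (hsub hx)).mono hsub) (hf''.mono hsub)
  have hh_le : h ^ 2 ≤ ε := by
    have hn_ge := Nat.le_ceil ((b - a) / √ε)
    rw [div_le_iff₀ hsε] at hn_ge
    have : h ≤ √ε := by rw [div_le_iff₀ hn']; linarith
    calc h ^ 2 ≤ √ε ^ 2 := by gcongr
      _ = ε := Real.sq_sqrt hε.le
  have hinv_le : 216 / h ^ 2 ≤ 432 * (1 / ε + 1 / (b - a) ^ 2) := by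
    have hn_lt : (n : ℝ) < (b - a) / √ε + 1 := Nat.ceil_lt_add_one (by positivity)
    have hinv : 1 / h ≤ 1 / √ε + 1 / (b - a) := by
      rw [one_div_div, div_le_iff₀ hba]
      calc (n : ℝ) ≤ (b - a) / √ε + 1 := hn_lt.le
        _ = (1 / √ε + 1 / (b - a)) * (b - a) := by field_simp
    have hsq : (1 / √ε + 1 / (b - a)) ^ 2 ≤ 2 * (1 / ε + 1 / (b - a) ^ 2) := by
      have hx : (1 / √ε) ^ 2 = 1 / ε := by rw [div_pow, one_pow, Real.sq_sqrt hε.le]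
      have hy : (1 / (b - a)) ^ 2 = 1 / (b - a) ^ 2 := by rw [div_pow, one_pow]
      nlinarith [sq_nonneg (1 / √ε - 1 / (b - a))]
    calc 216 / h ^ 2 = 216 * (1 / h) ^ 2 := by rw [one_div_pow, mul_one_div]
      _ ≤ 216 * (1 / √ε + 1 / (b - a)) ^ 2 := by gcongr
      _ ≤ 432 * (1 / ε + 1 / (b - a) ^ 2) := by linarith
  rw [intervalIntegral.integral_add ((hint hcont).const_mul _) ((hint hf'').const_mul _),
    intervalIntegral.integral_const_mul, intervalIntegral.integral_const_mul] at hpieces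
  have hQ : 0 ≤ ∫ t in a..b, f t ^ 2 :=
    intervalIntegral.integral_nonneg hab.le fun t _ => sq_nonneg _
  have hQ₂ : 0 ≤ ∫ t in a..b, f'' t ^ 2 :=
    intervalIntegral.integral_nonneg hab.le fun t _ => sq_nonneg _
  exact hpieces.trans (add_le_add (mul_le_mul_of_nonneg_right hinv_le hQ)
    (mul_le_mul_of_nonneg_right (by linarith) hQ₂))
end

/-- Quantitative lower bound underlying Proposition 3.1: for twice continuously
differentiable `R` on `[δ, 1-δ]` with `∫ (R'')² ≤ C₁ M²` and `∫ (R')² ≥ c₂`, one has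
`∫ R² ≥ k M⁻²` for a constant `k > 0` depending only on `C₁`, `c₂`, `δ`. -/
theorem stmt_1
    (δ C₁ c₂ : ℝ) (hδ : δ ∈ Ioo (0:ℝ) (1/2)) (hC₁ : 0 < C₁) (hc₂ : 0 < c₂) :
    ∃ k : ℝ, 0 < k ∧ ∀ M : ℝ, 1 ≤ M →
      ∀ R R' R'' : ℝ → ℝ,
        (∀ t ∈ Icc δ (1 - δ), HasDerivWithinAt R (R' t) (Icc δ (1 - δ)) t) →
        (∀ t ∈ Icc δ (1 - δ), HasDerivWithinAt R' (R'' t) (Icc δ (1 - δ)) t) →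
        ContinuousOn R'' (Icc δ (1 - δ)) →
        (∫ t in δ..(1 - δ), (R'' t) ^ 2) ≤ C₁ * M ^ 2 →
        c₂ ≤ (∫ t in δ..(1 - δ), (R' t) ^ 2) →
        k / M ^ 2 ≤ ∫ t in δ..(1 - δ), (R t) ^ 2 := by
  have hδ' : δ < 1 - δ := by linarith [hδ.2]
  set K := 4 * C₁ / c₂ + 1 / (1 - δ - δ) ^ 2
  refine ⟨c₂ / (864 * K), by positivity, fun M hM R R' R'' hR hR' hR'' hupper hlower => ?_⟩
  -- Halperin–Pitt with `ε = c₂ / (4 C₁ M²)`, chosen so that the `R''` term is at most `c₂ / 2`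
  have hHP := integral_sq_deriv_le (ε := c₂ / (4 * C₁ * M ^ 2)) hδ' (by positivity) hR hR' hR''
  have hR''_term : 2 * (c₂ / (4 * C₁ * M ^ 2)) * (∫ t in δ..(1 - δ), R'' t ^ 2) ≤ c₂ / 2 := by
    calc _ ≤ 2 * (c₂ / (4 * C₁ * M ^ 2)) * (C₁ * M ^ 2) := by gcongr
      _ = c₂ / 2 := by field_simp; ring
  have hcoef : 1 / (c₂ / (4 * C₁ * M ^ 2)) + 1 / (1 - δ - δ) ^ 2 ≤ M ^ 2 * K := by
    have hM2 : 1 ≤ M ^ 2 := one_le_pow₀ hM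
    calc 1 / (c₂ / (4 * C₁ * M ^ 2)) + 1 / (1 - δ - δ) ^ 2
        = M ^ 2 * (4 * C₁ / c₂) + 1 / (1 - δ - δ) ^ 2 := by rw [one_div_div]; ring
      _ ≤ M ^ 2 * (4 * C₁ / c₂) + M ^ 2 * (1 / (1 - δ - δ) ^ 2) := by
        gcongr; exact le_mul_of_one_le_left (by positivity) hM2
      _ = M ^ 2 * K := by ring
  have hQ : 0 ≤ ∫ t in δ..(1 - δ), R t ^ 2 :=
    intervalIntegral.integral_nonneg hδ'.le fun t _ => sq_nonneg _
  have key := mul_le_mul_of_nonneg_right hcoef hQ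
  rw [div_div, div_le_iff₀ (by positivity)]
  linarith
end

section
/- Fix δ ∈ (0, 1/2) and constants 0 < c₀ ≤ c₁ < ∞, c₂ > 0, C₃ > 0. There exists a constant k > 0, depending only on δ, c₂ and C₃, such that the following holds for every M ≥ 1. Let J be an interval, h : J → ℝ continuously differentiable with c₀ ≤ h ≤ c₁ on J, and X : [δ, 1−δ] → J continuously differentiable with X′(t) = h(X(t)) for all t. Let b : J → ℝ be continuously differentiable with ∫_{X(δ)}^{X(1−δ)} b(v)²/h(v)³ dv ≥ c₂ and ∫_δ^{1−δ} ( b′(X(t)) − b(X(t)) h′(X(t))/h(X(t)) )² dt ≤ C₃ M². Then, with R(t) := ∫_δ^t b(X(u))/h(X(u)) du, one has ∫_δ^{1−δ} (R(t))² dt ≥ k M⁻². -/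
/-!
Put `g = b∘X / h∘X`, so that `R' = g` and, by the chain rule and `X' = h∘X`,
`g' = b'∘X - (b h' / h)∘X`; the substitution `v = X t` turns `∫ b² / h³ dv` into `∫ g²`.
It remains to bound `∫ g²` by `∫ R²` and `∫ (g')²` (an inequality of Halperin–Pitt type).
On an interval of length `l`, the mean `A` of `g` against the weight `6 (t - x) (y - t) / l³`
satisfies `A² ≤ 12 l⁻³ ∫ R²` after one integration by parts and Cauchy–Schwarz, while `g`
stays within `∫ |g'| ≤ (l ∫ (g')²)^(1/2)` of `A`; hence `∫ g² ≤ 24 l⁻² ∫ R² + 2 l² ∫ (g')²`.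
Cutting `[δ, 1 - δ]` into pieces of length `l ≍ 1 / M` makes the last term at most `c₂ / 2`,
which leaves `∫ R² ≳ l² ≍ M⁻²`.
-/

open MeasureTheory Set intervalIntegral

lemma sq_intervalIntegral_mul_le {a b : ℝ} (hab : a ≤ b) {u v : ℝ → ℝ}
    (hu : ContinuousOn u (Icc a b)) (hv : ContinuousOn v (Icc a b)) :
    (∫ t in a..b, u t * v t) ^ 2 ≤ (∫ t in a..b, u t ^ 2) * ∫ t in a..b, v t ^ 2 := by
  have hu2 : IntervalIntegrable (fun t => u t ^ 2) volume a b :=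
    (hu.pow 2).intervalIntegrable_of_Icc hab
  have hv2 : IntervalIntegrable (fun t => v t ^ 2) volume a b :=
    (hv.pow 2).intervalIntegrable_of_Icc hab
  have huv : IntervalIntegrable (fun t => u t * v t) volume a b :=
    (hu.mul hv).intervalIntegrable_of_Icc hab
  have hquad (s : ℝ) : 0 ≤ (∫ t in a..b, v t ^ 2) * (s * s) + 2 * (∫ t in a..b, u t * v t) * s
      + ∫ t in a..b, u t ^ 2 := by
    have hexp : ∫ t in a..b, (s * v t + u t) ^ 2 = (∫ t in a..b, v t ^ 2) * (s * s)
        + 2 * (∫ t in a..b, u t * v t) * s + ∫ t in a..b, u t ^ 2 := by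
      have e : (fun t => (s * v t + u t) ^ 2)
          = fun t => s ^ 2 * v t ^ 2 + 2 * s * (u t * v t) + u t ^ 2 := by ext; ring
      rw [e, integral_add ((hv2.const_mul _).add (huv.const_mul _)) hu2,
        integral_add (hv2.const_mul _) (huv.const_mul _), intervalIntegral.integral_const_mul,
        intervalIntegral.integral_const_mul]
      ring
    exact hexp ▸ integral_nonneg hab fun t _ => sq_nonneg _
  have hdiscr := discrim_le_zero hquad
  rw [discrim] at hdiscr
  linarith

lemma integral_bump (x y : ℝ) : ∫ t in x..y, (t - x) * (y - t) = (y - x) ^ 3 / 6 := by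
  have hF (t : ℝ) : HasDerivAt (fun t => (x + y) * t ^ 2 / 2 - t ^ 3 / 3 - x * y * t)
      ((t - x) * (y - t)) t := by
    refine ((((hasDerivAt_pow 2 t).const_mul (x + y)).div_const 2).sub
      ((hasDerivAt_pow 3 t).div_const 3) |>.sub
        ((hasDerivAt_id t).const_mul (x * y))).congr_deriv ?_
    push_cast; ring
  rw [integral_eq_sub_of_hasDerivAt (fun t _ => hF t)
    ((by fun_prop : Continuous _).intervalIntegrable _ _)]
  ring

lemma integral_sq_deriv_bump (x y : ℝ) : ∫ t in x..y, (x + y - 2 * t) ^ 2 = (y - x) ^ 3 / 3 := by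
  have hF (t : ℝ) : HasDerivAt (fun t => -(x + y - 2 * t) ^ 3 / 6) ((x + y - 2 * t) ^ 2) t := by
    refine (((((hasDerivAt_id' t).const_mul 2).const_sub (x + y)).pow 3).neg.div_const 6
      ).congr_deriv ?_
    push_cast; ring
  rw [integral_eq_sub_of_hasDerivAt (fun t _ => hF t)
    ((by fun_prop : Continuous _).intervalIntegrable _ _)]
  ring

lemma sq_integral_mul_bump_le {f g : ℝ → ℝ} {x y : ℝ} (hxy : x ≤ y)
    (hf : ContinuousOn f (Icc x y)) (hf' : ∀ t ∈ Ioo x y, HasDerivAt f (g t) t)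
    (hg : ContinuousOn g (Icc x y)) :
    (∫ t in x..y, g t * ((t - x) * (y - t))) ^ 2 ≤ (y - x) ^ 3 / 3 * ∫ t in x..y, f t ^ 2 := by
  have hgi : IntervalIntegrable (fun t => g t * ((t - x) * (y - t))) volume x y :=
    (hg.mul (by fun_prop)).intervalIntegrable_of_Icc hxy
  have hfi : IntervalIntegrable (fun t => f t * (x + y - 2 * t)) volume x y :=
    (hf.mul (by fun_prop)).intervalIntegrable_of_Icc hxy
  have hibp : ∫ t in x..y, g t * ((t - x) * (y - t)) = -∫ t in x..y, f t * (x + y - 2 * t) := by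
    have := integral_deriv_mul_eq_sub_of_hasDerivAt (u := f) (u' := g)
      (v := fun t => (t - x) * (y - t)) (by rwa [uIcc_of_le hxy]) (by fun_prop)
      (by rwa [min_eq_left hxy, max_eq_right hxy])
      (fun t _ => (((hasDerivAt_id' t).sub_const x).mul
        ((hasDerivAt_id' t).const_sub y)).congr_deriv (by ring : _ = x + y - 2 * t))
      (hg.intervalIntegrable_of_Icc hxy) ((by fun_prop : Continuous _).intervalIntegrable _ _)
    rw [integral_add hgi hfi] at this
    simp only [sub_self, mul_zero, zero_mul] at this
    linarith
  rw [hibp, neg_sq, ← integral_sq_deriv_bump, mul_comm]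
  exact sq_intervalIntegral_mul_le hxy hf (by fun_prop)

lemma abs_sub_le_integral_abs_deriv {g w : ℝ → ℝ} {x y : ℝ}
    (hg : ContinuousOn g (Icc x y)) (hg' : ∀ t ∈ Ioo x y, HasDerivAt g (w t) t)
    (hw : ContinuousOn w (Icc x y)) {s t : ℝ} (hs : s ∈ Icc x y) (ht : t ∈ Icc x y) :
    |g t - g s| ≤ ∫ u in x..y, |w u| := by
  wlog hst : s ≤ t generalizing s t
  · rw [abs_sub_comm]; exact this ht hs (le_of_not_ge hst)
  have hsub : Icc s t ⊆ Icc x y := Icc_subset_Icc hs.1 ht.2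
  rw [← integral_eq_sub_of_hasDerivAt_of_le hst (hg.mono hsub)
    (fun u hu => hg' u (Ioo_subset_Ioo hs.1 ht.2 hu))
    ((hw.mono hsub).intervalIntegrable_of_Icc hst)]
  calc |∫ u in s..t, w u| ≤ ∫ u in s..t, |w u| := abs_integral_le_integral_abs hst
    _ ≤ ∫ u in x..y, |w u| := integral_mono_interval hs.1 hst ht.2
      (Filter.Eventually.of_forall fun u => abs_nonneg _)
      (hw.abs.intervalIntegrable_of_Icc (hs.1.trans (hst.trans ht.2)))

lemma abs_sub_integral_mul_le {g ψ : ℝ → ℝ} {x y D t : ℝ} (hxy : x ≤ y)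
    (hg : ContinuousOn g (Icc x y)) (hψ : ContinuousOn ψ (Icc x y))
    (hψ0 : ∀ s ∈ Icc x y, 0 ≤ ψ s) (hψ1 : ∫ s in x..y, ψ s = 1)
    (hD : ∀ s ∈ Icc x y, |g t - g s| ≤ D) :
    |g t - ∫ s in x..y, g s * ψ s| ≤ D := by
  have hψi := hψ.intervalIntegrable_of_Icc (μ := volume) hxy
  have hgψi : IntervalIntegrable (fun s => g s * ψ s) volume x y :=
    (hg.mul hψ).intervalIntegrable_of_Icc hxy
  have e : g t - ∫ s in x..y, g s * ψ s = ∫ s in x..y, (g t - g s) * ψ s := by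
    simp only [sub_mul]
    rw [integral_sub (hψi.const_mul _) hgψi, intervalIntegral.integral_const_mul, hψ1, mul_one]
  rw [e]
  calc _ ≤ ∫ s in x..y, |(g t - g s) * ψ s| := abs_integral_le_integral_abs hxy
    _ ≤ ∫ s in x..y, D * ψ s := by
      refine integral_mono_on hxy ?_ (hψi.const_mul D) fun s hs => ?_
      · exact ((continuousOn_const.sub hg).mul hψ).abs.intervalIntegrable_of_Icc hxy
      · rw [abs_mul, abs_of_nonneg (hψ0 s hs)]
        exact mul_le_mul_of_nonneg_right (hD s hs) (hψ0 s hs)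
    _ = D := by rw [intervalIntegral.integral_const_mul, hψ1, mul_one]

lemma integral_sq_deriv_le_s3 {f g w : ℝ → ℝ} {x y : ℝ} (hxy : x < y)
    (hf : ContinuousOn f (Icc x y)) (hf' : ∀ t ∈ Ioo x y, HasDerivAt f (g t) t)
    (hg : ContinuousOn g (Icc x y)) (hg' : ∀ t ∈ Ioo x y, HasDerivAt g (w t) t)
    (hw : ContinuousOn w (Icc x y)) :
    ∫ t in x..y, g t ^ 2 ≤
      24 / (y - x) ^ 2 * (∫ t in x..y, f t ^ 2) + 2 * (y - x) ^ 2 * ∫ t in x..y, w t ^ 2 := by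
  set l := y - x with hl_def
  have hl : 0 < l := sub_pos.2 hxy
  set F := ∫ t in x..y, f t ^ 2
  set W := ∫ t in x..y, w t ^ 2
  set ψ : ℝ → ℝ := fun t => 6 / l ^ 3 * ((t - x) * (y - t))
  set A := ∫ t in x..y, g t * ψ t
  set D := ∫ t in x..y, |w t|
  have hA : A ^ 2 ≤ 12 / l ^ 3 * F := by
    have e : A = 6 / l ^ 3 * ∫ t in x..y, g t * ((t - x) * (y - t)) := by
      rw [← intervalIntegral.integral_const_mul]
      exact integral_congr fun t _ => by simp only [ψ]; ring
    rw [e, mul_pow]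
    calc _ ≤ (6 / l ^ 3) ^ 2 * (l ^ 3 / 3 * F) :=
          mul_le_mul_of_nonneg_left (sq_integral_mul_bump_le hxy.le hf hf' hg) (by positivity)
      _ = 12 / l ^ 3 * F := by field_simp; ring
  have hD : D ^ 2 ≤ l * W := by
    have := sq_intervalIntegral_mul_le hxy.le hw.abs (continuousOn_const (c := 1))
    simpa [sq_abs, mul_comm] using this
  have hψ1 : ∫ t in x..y, ψ t = 1 := by
    rw [intervalIntegral.integral_const_mul, integral_bump, ← hl_def]
    field_simp
  have hmean (t : ℝ) (ht : t ∈ Icc x y) : |g t - A| ≤ D :=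
    abs_sub_integral_mul_le hxy.le hg (by fun_prop)
      (fun s hs => mul_nonneg (by positivity) (mul_nonneg (sub_nonneg.2 hs.1) (sub_nonneg.2 hs.2)))
      hψ1 fun s hs => abs_sub_le_integral_abs_deriv hg hg' hw hs ht
  have hpt (t : ℝ) (ht : t ∈ Icc x y) : g t ^ 2 ≤ 2 * A ^ 2 + 2 * D ^ 2 := by
    obtain ⟨hlow, hupp⟩ := abs_le.1 (hmean t ht)
    nlinarith [sq_nonneg (g t - 2 * A),
      mul_nonneg (neg_le_iff_add_nonneg.1 hlow) (sub_nonneg.2 hupp)]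
  calc ∫ t in x..y, g t ^ 2 ≤ ∫ t in x..y, (2 * A ^ 2 + 2 * D ^ 2) :=
        integral_mono_on hxy.le ((hg.pow 2).intervalIntegrable_of_Icc hxy.le)
          intervalIntegrable_const hpt
    _ = l * (2 * A ^ 2 + 2 * D ^ 2) := by rw [intervalIntegral.integral_const, smul_eq_mul]
    _ ≤ l * (2 * (12 / l ^ 3 * F) + 2 * (l * W)) := by gcongr
    _ = 24 / l ^ 2 * F + 2 * l ^ 2 * W := by field_simp; ring

lemma integral_sq_deriv_le_of_partition {f g w : ℝ → ℝ} {a b : ℝ} (hab : a < b)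
    (hf : ContinuousOn f (Icc a b)) (hf' : ∀ t ∈ Ioo a b, HasDerivAt f (g t) t)
    (hg : ContinuousOn g (Icc a b)) (hg' : ∀ t ∈ Ioo a b, HasDerivAt g (w t) t)
    (hw : ContinuousOn w (Icc a b)) {n : ℕ} (hn : 0 < n) :
    ∫ t in a..b, g t ^ 2 ≤ 24 / ((b - a) / n) ^ 2 * (∫ t in a..b, f t ^ 2)
      + 2 * ((b - a) / n) ^ 2 * ∫ t in a..b, w t ^ 2 := by
  set l := (b - a) / n
  have hl : 0 < l := div_pos (sub_pos.2 hab) (Nat.cast_pos.2 hn)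
  set p : ℕ → ℝ := fun i => a + i * l
  have hp_succ (i : ℕ) : p (i + 1) - p i = l := by simp only [p]; push_cast; ring
  have hp_mono : Monotone p := fun i j hij => by simp only [p]; gcongr
  have hp0 : p 0 = a := by simp [p]
  have hpn : p n = b := by simp only [p, l]; field_simp; ring
  have hlo (i : ℕ) : a ≤ p i := hp0 ▸ hp_mono i.zero_le
  have hhi (i : ℕ) (hi : i < n) : p (i + 1) ≤ b := hpn ▸ hp_mono hi
  have hsum {φ : ℝ → ℝ} (hφ : ContinuousOn φ (Icc a b)) :
      ∑ i ∈ Finset.range n, ∫ t in p i..p (i + 1), φ t = ∫ t in a..b, φ t := by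
    rw [sum_integral_adjacent_intervals fun i hi => (hφ.mono (Icc_subset_Icc (hlo i) (hhi i hi))
      |>.intervalIntegrable_of_Icc (hp_mono i.le_succ)), hp0, hpn]
  rw [← hsum (φ := fun t => g t ^ 2) (hg.pow 2), ← hsum (φ := fun t => f t ^ 2) (hf.pow 2),
    ← hsum (φ := fun t => w t ^ 2) (hw.pow 2), Finset.mul_sum, Finset.mul_sum,
    ← Finset.sum_add_distrib]
  refine Finset.sum_le_sum fun i hi_mem => ?_
  have hi := Finset.mem_range.1 hi_mem
  have hIcc := Icc_subset_Icc (hlo i) (hhi i hi)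
  have hIoo := Ioo_subset_Ioo (hlo i) (hhi i hi)
  have hpiece := integral_sq_deriv_le_s3 (sub_pos.1 ((hp_succ i).symm ▸ hl)) (hf.mono hIcc)
    (fun t ht => hf' t (hIoo ht)) (hg.mono hIcc) (fun t ht => hg' t (hIoo ht)) (hw.mono hIcc)
  rwa [hp_succ i] at hpiece

lemma exists_pos_div_sq_le_integral_sq {a b c₂ C₃ : ℝ} (hab : a < b) (hc₂ : 0 < c₂)
    (hC₃ : 0 ≤ C₃) :
    ∃ k : ℝ, 0 < k ∧ ∀ M : ℝ, 1 ≤ M → ∀ f g w : ℝ → ℝ,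
      ContinuousOn f (Icc a b) → (∀ t ∈ Ioo a b, HasDerivAt f (g t) t) →
      ContinuousOn g (Icc a b) → (∀ t ∈ Ioo a b, HasDerivAt g (w t) t) →
      ContinuousOn w (Icc a b) →
      c₂ ≤ ∫ t in a..b, g t ^ 2 → ∫ t in a..b, w t ^ 2 ≤ C₃ * M ^ 2 →
      k / M ^ 2 ≤ ∫ t in a..b, f t ^ 2 := by
  set L := b - a
  have hL : 0 < L := sub_pos.2 hab
  set K := 1 + 4 * L ^ 2 * C₃ / c₂
  have hK : 1 ≤ K := le_add_of_nonneg_right (by positivity)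
  refine ⟨c₂ * L ^ 2 / (48 * (K + 1) ^ 2), by positivity, ?_⟩
  intro M hM f g w hf hf' hg hg' hw hg2 hw2
  set F := ∫ t in a..b, f t ^ 2
  set W := ∫ t in a..b, w t ^ 2
  -- pieces of length `l ≍ 1 / M` make the `∫ w²` term at most `c₂ / 2`
  set n := ⌈K * M⌉₊
  have hn_ge : K * M ≤ n := Nat.le_ceil _
  have hn_le : (n : ℝ) ≤ (K + 1) * M :=
    (Nat.ceil_lt_add_one (by positivity)).le.trans (by nlinarith)
  have hn : 0 < n := Nat.ceil_pos.2 (by positivity)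
  have hinterp := integral_sq_deriv_le_of_partition hab hf hf' hg hg' hw hn
  set l := L / n
  have hl : 0 < l := by positivity
  have hln : l * n = L := div_mul_cancel₀ L (Nat.cast_pos.2 hn).ne'
  have hKc : 4 * L ^ 2 * C₃ ≤ c₂ * K ^ 2 :=
    calc 4 * L ^ 2 * C₃ = c₂ * (K - 1) := by simp only [K]; field_simp; ring
      _ ≤ c₂ * K ^ 2 := by gcongr; nlinarith
  have hlM : 4 * C₃ * (l * M) ^ 2 ≤ c₂ := by
    refine le_of_mul_le_mul_right ?_ (by positivity : 0 < K ^ 2)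
    calc 4 * C₃ * (l * M) ^ 2 * K ^ 2 = 4 * C₃ * (l * (K * M)) ^ 2 := by ring
      _ ≤ 4 * C₃ * (l * n) ^ 2 := by gcongr
      _ = 4 * L ^ 2 * C₃ := by rw [hln]; ring
      _ ≤ c₂ * K ^ 2 := hKc
  have hsmall : 2 * l ^ 2 * W ≤ c₂ / 2 := by
    nlinarith [mul_le_mul_of_nonneg_left hw2 (sq_nonneg l)]
  have hF : c₂ * l ^ 2 ≤ 48 * F := by
    have : c₂ / 2 ≤ 24 / l ^ 2 * F := by linarith
    rw [div_mul_eq_mul_div, le_div_iff₀ (by positivity)] at this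
    linarith
  rw [div_div, div_le_iff₀ (by positivity)]
  calc c₂ * L ^ 2 = c₂ * (l * n) ^ 2 := by rw [hln]
    _ ≤ c₂ * (l * ((K + 1) * M)) ^ 2 := by gcongr
    _ = c₂ * l ^ 2 * ((K + 1) ^ 2 * M ^ 2) := by ring
    _ ≤ 48 * F * ((K + 1) ^ 2 * M ^ 2) := by gcongr
    _ = F * (48 * (K + 1) ^ 2 * M ^ 2) := by ring

lemma continuousOn_primitive_Icc {g : ℝ → ℝ} {a b : ℝ} (hab : a ≤ b)
    (hg : ContinuousOn g (Icc a b)) : ContinuousOn (fun s => ∫ u in a..s, g u) (Icc a b) := by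
  rw [← uIcc_of_le hab]
  exact continuousOn_primitive_interval (by rw [uIcc_of_le hab]; exact hg.integrableOn_Icc)

lemma hasDerivAt_integral_of_continuousOn {g : ℝ → ℝ} {a b t : ℝ}
    (hg : ContinuousOn g (Icc a b)) (ht : t ∈ Ioo a b) :
    HasDerivAt (fun s => ∫ u in a..s, g u) (g t) t :=
  integral_hasDerivAt_right
    ((hg.mono (Icc_subset_Icc le_rfl ht.2.le)).intervalIntegrable_of_Icc ht.1.le)
    ((hg.mono Ioo_subset_Icc_self).stronglyMeasurableAtFilter isOpen_Ioo t ht)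
    (hg.continuousAt (Icc_mem_nhds ht.1 ht.2))

lemma hasDerivWithinAt_comp_div_comp {b b' h h' X : ℝ → ℝ} {J s : Set ℝ} {t : ℝ}
    (hb : HasDerivWithinAt b (b' (X t)) J (X t)) (hh : HasDerivWithinAt h (h' (X t)) J (X t))
    (hX : HasDerivWithinAt X (h (X t)) s t) (hXs : MapsTo X s J) (hne : h (X t) ≠ 0) :
    HasDerivWithinAt (fun u => b (X u) / h (X u))
      (b' (X t) - b (X t) * h' (X t) / h (X t)) s t :=
  ((hb.comp t hX hXs).div (hh.comp t hX hXs) hne).congr_deriv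
    (by simp only [Function.comp_apply]; field_simp)

lemma integral_sq_comp_div_comp_eq {b h X : ℝ → ℝ} {J : Set ℝ} {a c : ℝ} (hac : a ≤ c)
    (hb : ContinuousOn b J) (hh : ContinuousOn h J) (hh0 : ∀ x ∈ J, h x ≠ 0)
    (hX : ∀ t ∈ Icc a c, HasDerivWithinAt X (h (X t)) (Icc a c) t) (hXJ : MapsTo X (Icc a c) J) :
    ∫ t in a..c, (b (X t) / h (X t)) ^ 2 = ∫ v in X a..X c, b v ^ 2 / h v ^ 3 := by
  have hXc : ContinuousOn X (Icc a c) := fun t ht => (hX t ht).continuousWithinAt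
  rw [← uIcc_of_le hac] at hXc hXJ
  rw [← integral_comp_mul_deriv'' hXc (f' := fun t => h (X t))
    (g := fun v => b v ^ 2 / h v ^ 3) ?_ (hh.comp hXc hXJ)
    (((hb.pow 2).div (hh.pow 3) fun x hx => pow_ne_zero 3 (hh0 x hx)).mono hXJ.image_subset)]
  · refine integral_congr fun t ht => ?_
    have hne := hh0 _ (hXJ ht)
    simp only [Function.comp]
    field_simp
  · rw [min_eq_left hac, max_eq_right hac]
    exact fun t ht => ((hX t (Ioo_subset_Icc_self ht)).hasDerivAt
      (Icc_mem_nhds ht.1 ht.2)).hasDerivWithinAt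

/-- Quantitative core of Proposition 3.1: with `R(t) = ∫_δ^t b(X(u))/h(X(u)) du`, a bound
`∫ (b'(X) - b(X)h'(X)/h(X))² ≤ C₃ M²` and a lower bound `∫ b²/h³ ≥ c₂` imply
`∫ R² ≥ k M⁻²`, with `k` depending only on `δ`, `c₂`, `C₃`. -/
theorem stmt_3
    (δ c₂ C₃ : ℝ) (hδ : δ ∈ Ioo (0:ℝ) (1/2)) (hc₂ : 0 < c₂) (hC₃ : 0 < C₃) :
    ∃ k : ℝ, 0 < k ∧ ∀ c₀ c₁ : ℝ, 0 < c₀ → c₀ ≤ c₁ →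
      ∀ M : ℝ, 1 ≤ M →
      ∀ J : Set ℝ, J.OrdConnected →
      ∀ h h' : ℝ → ℝ,
        (∀ x ∈ J, HasDerivWithinAt h (h' x) J x) → ContinuousOn h' J →
        (∀ x ∈ J, c₀ ≤ h x) → (∀ x ∈ J, h x ≤ c₁) →
      ∀ X : ℝ → ℝ,
        (∀ t ∈ Icc δ (1 - δ), X t ∈ J) →
        (∀ t ∈ Icc δ (1 - δ), HasDerivWithinAt X (h (X t)) (Icc δ (1 - δ)) t) →
      ∀ b b' : ℝ → ℝ,
        (∀ x ∈ J, HasDerivWithinAt b (b' x) J x) → ContinuousOn b' J →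
        c₂ ≤ (∫ v in (X δ)..(X (1 - δ)), (b v) ^ 2 / (h v) ^ 3) →
        (∫ t in δ..(1 - δ), (b' (X t) - b (X t) * h' (X t) / h (X t)) ^ 2) ≤ C₃ * M ^ 2 →
        k / M ^ 2 ≤ ∫ t in δ..(1 - δ), (∫ u in δ..t, b (X u) / h (X u)) ^ 2 := by
  have hδ' : δ < 1 - δ := by linarith [hδ.2]
  obtain ⟨k, hk, hbound⟩ := exists_pos_div_sq_le_integral_sq hδ' hc₂ hC₃.le
  refine ⟨k, hk, fun c₀ _ hc₀ _ M hM J _ h h' hh hh' hc₀h _ X hXJ hX b b' hb hb' hbh hW => ?_⟩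
  have hh0 (x : ℝ) (hx : x ∈ J) : h x ≠ 0 := (hc₀.trans_le (hc₀h x hx)).ne'
  have hhc : ContinuousOn h J := fun x hx => (hh x hx).continuousWithinAt
  have hbc : ContinuousOn b J := fun x hx => (hb x hx).continuousWithinAt
  have hXc : ContinuousOn X (Icc δ (1 - δ)) := fun t ht => (hX t ht).continuousWithinAt
  have hg : ContinuousOn (fun t => b (X t) / h (X t)) (Icc δ (1 - δ)) :=
    (hbc.comp hXc hXJ).div (hhc.comp hXc hXJ) fun t ht => hh0 _ (hXJ t ht)
  have hg' (t : ℝ) (ht : t ∈ Ioo δ (1 - δ)) : HasDerivAt (fun t => b (X t) / h (X t))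
      (b' (X t) - b (X t) * h' (X t) / h (X t)) t :=
    have hXt := hXJ t (Ioo_subset_Icc_self ht)
    (hasDerivWithinAt_comp_div_comp (hb _ hXt) (hh _ hXt) (hX t (Ioo_subset_Icc_self ht)) hXJ
      (hh0 _ hXt)).hasDerivAt (Icc_mem_nhds ht.1 ht.2)
  have hw : ContinuousOn (fun t => b' (X t) - b (X t) * h' (X t) / h (X t)) (Icc δ (1 - δ)) :=
    (hb'.comp hXc hXJ).sub (((hbc.comp hXc hXJ).mul (hh'.comp hXc hXJ)).div
      (hhc.comp hXc hXJ) fun t ht => hh0 _ (hXJ t ht))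
  exact hbound M hM _ _ _ (continuousOn_primitive_Icc hδ'.le hg)
    (fun t ht => hasDerivAt_integral_of_continuousOn hg ht) hg hg' hw
    ((integral_sq_comp_div_comp_eq hδ'.le hbc hhc hh0 hX hXJ).symm ▸ hbh) hW
end

section
/- Let J be an open interval, g : J → ℝ continuously differentiable with g > 0 on J, and let X : [0,1] → J be continuously differentiable with X′(t) = g(X(t)) for all t ∈ [0,1] and X(0) = x₀. Let φ : J → ℝ be continuous. If v : [0,1] → ℝ is differentiable and satisfies v′(t) = g′(X(t)) v(t) + φ(X(t)) for all t, with v(0) = 0, then v(t) = g(X(t)) ∫_{x₀}^{X(t)} φ(x) / (g(x))² dx for all t ∈ [0,1]. -/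
open MeasureTheory Set

/-!
Along the flow, `(g ∘ X)' = (g' ∘ X) · (g ∘ X)`, so `g ∘ X` solves the homogeneous variational
equation and serves as an integrating factor: with `F` a primitive of `φ / g²`, the quotient
`v / (g ∘ X) - F ∘ X` has derivative `φ(X) / g(X) - (φ(X) / g(X)²) · g(X) = 0`. It therefore
vanishes identically, since it vanishes at `t = 0`.
-/

theorem constant_of_hasDerivWithinAt_zero_Icc {E : Type*} [NormedAddCommGroup E]
    [NormedSpace ℝ E] {f : ℝ → E} {a b : ℝ}
    (hf : ∀ x ∈ Icc a b, HasDerivWithinAt f 0 (Icc a b) x) : ∀ x ∈ Icc a b, f x = f a := by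
  simpa only [zero_mul, norm_le_zero_iff, sub_eq_zero] using
    norm_image_sub_le_of_norm_deriv_le_segment' hf fun _ _ => norm_zero.le

theorem ContinuousOn.hasDerivAt_intervalIntegral_of_isOpen {E : Type*} [NormedAddCommGroup E]
    [NormedSpace ℝ E] [CompleteSpace E] {J : Set ℝ} (hJopen : IsOpen J) (hJ : J.OrdConnected)
    {f : ℝ → E} (hf : ContinuousOn f J) {a y : ℝ} (ha : a ∈ J) (hy : y ∈ J) :
    HasDerivAt (fun y => ∫ x in a..y, f x) (f y) y :=
  intervalIntegral.integral_hasDerivAt_right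
    ((hf.mono (hJ.uIcc_subset ha hy)).intervalIntegrable)
    (hf.stronglyMeasurableAtFilter hJopen y hy) (hf.continuousAt (hJopen.mem_nhds hy))

theorem hasDerivWithinAt_div_comp_sub_primitive_comp {s : Set ℝ} {t : ℝ} {X v g F : ℝ → ℝ}
    {g'X φX : ℝ} (hX : HasDerivWithinAt X (g (X t)) s t) (hg : HasDerivAt g g'X (X t))
    (hF : HasDerivAt F (φX / g (X t) ^ 2) (X t))
    (hv : HasDerivWithinAt v (g'X * v t + φX) s t) (hgX : g (X t) ≠ 0) :
    HasDerivWithinAt (fun τ => v τ / g (X τ) - F (X τ)) 0 s t := by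
  have hgX' : HasDerivWithinAt (fun τ => g (X τ)) (g'X * g (X t)) s t :=
    hg.comp_hasDerivWithinAt t hX
  refine ((hv.div hgX' hgX).sub (hF.comp_hasDerivWithinAt t hX)).congr_deriv ?_
  field_simp
  ring

theorem stmt_5_general
    (J : Set ℝ) (hJopen : IsOpen J) (hJ : J.OrdConnected)
    (g g' : ℝ → ℝ) (hg : ∀ x ∈ J, HasDerivAt g (g' x) x)
    (hgpos : ∀ x ∈ J, 0 < g x)
    (X : ℝ → ℝ) (hmap : ∀ t ∈ Icc (0:ℝ) 1, X t ∈ J)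
    (hX : ∀ t ∈ Icc (0:ℝ) 1, HasDerivWithinAt X (g (X t)) (Icc (0:ℝ) 1) t)
    (x₀ : ℝ) (hX0 : X 0 = x₀)
    (φ : ℝ → ℝ) (hφ : ContinuousOn φ J)
    (v : ℝ → ℝ)
    (hv : ∀ t ∈ Icc (0:ℝ) 1,
      HasDerivWithinAt v (g' (X t) * v t + φ (X t)) (Icc (0:ℝ) 1) t)
    (hv0 : v 0 = 0) :
    ∀ t ∈ Icc (0:ℝ) 1, v t = g (X t) * ∫ x in x₀..(X t), φ x / (g x) ^ 2 := by
  have hgcont : ContinuousOn g J := fun x hx => (hg x hx).continuousAt.continuousWithinAt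
  have hx₀ : x₀ ∈ J := hX0 ▸ hmap 0 (left_mem_Icc.2 zero_le_one)
  have hF (y : ℝ) (hy : y ∈ J) :
      HasDerivAt (fun y => ∫ x in x₀..y, φ x / g x ^ 2) (φ y / g y ^ 2) y :=
    (hφ.div (hgcont.pow 2) fun x hx => pow_ne_zero 2 (hgpos x hx).ne')
      |>.hasDerivAt_intervalIntegral_of_isOpen hJopen hJ hx₀ hy
  intro t ht
  have hconst := constant_of_hasDerivWithinAt_zero_Icc (fun τ hτ =>
    hasDerivWithinAt_div_comp_sub_primitive_comp (hX τ hτ) (hg _ (hmap τ hτ))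
      (hF _ (hmap τ hτ)) (hv τ hτ) (hgpos _ (hmap τ hτ)).ne') t ht
  simp only [hv0, hX0, zero_div, intervalIntegral.integral_same, sub_zero, sub_eq_zero] at hconst
  rw [← hconst, mul_div_cancel₀ _ (hgpos _ (hmap t ht)).ne']

/-- Closed form of the first-order variational equation (equations (A.2) and (A.7)):
if `X' = g ∘ X` on `[0,1]` with `X(0) = x₀`, and `v' = g'(X(t)) v + φ(X(t))` with `v(0) = 0`,
then `v(t) = g(X(t)) ∫_{x₀}^{X(t)} φ(x)/g(x)² dx`. -/
theorem stmt_5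
    (J : Set ℝ) (hJopen : IsOpen J) (hJ : J.OrdConnected)
    (g g' : ℝ → ℝ) (hg : ∀ x ∈ J, HasDerivAt g (g' x) x)
    (hg' : ContinuousOn g' J) (hgpos : ∀ x ∈ J, 0 < g x)
    (X : ℝ → ℝ) (hmap : ∀ t ∈ Icc (0:ℝ) 1, X t ∈ J)
    (hX : ∀ t ∈ Icc (0:ℝ) 1, HasDerivWithinAt X (g (X t)) (Icc (0:ℝ) 1) t)
    (x₀ : ℝ) (hX0 : X 0 = x₀)
    (φ : ℝ → ℝ) (hφ : ContinuousOn φ J)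
    (v : ℝ → ℝ)
    (hv : ∀ t ∈ Icc (0:ℝ) 1,
      HasDerivWithinAt v (g' (X t) * v t + φ (X t)) (Icc (0:ℝ) 1) t)
    (hv0 : v 0 = 0) :
    ∀ t ∈ Icc (0:ℝ) 1, v t = g (X t) * ∫ x in x₀..(X t), φ x / (g x) ^ 2 :=
  stmt_5_general J hJopen hJ g g' hg hgpos X hmap hX x₀ hX0 φ hφ v hv hv0
end

section
/- Let x₀ < x₁ and constants c₀ > 0, c₂ ≥ 0. Let g : [x₀,x₁] → ℝ be continuously differentiable with g ≥ c₀ and |g′| ≤ c₂ on [x₀,x₁], and set G(x) = ∫_{x₀}^x g(u) du. Let S : [x₀,x₁] → ℝ be continuously differentiable with sup_{x ∈ [x₀,x₁]} |G(x) − S(x)| ≤ ε. Then for all x ∈ [x₀,x₁], | ∫_{x₀}^x (g(u) − S′(u)) / g(u) du | ≤ ( 2/c₀ + c₂ (x₁ − x₀) / c₀² ) · ε. -/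
open MeasureTheory Set
open scoped Interval

/-! Write `F = G - S`, so that `F' = g - S'` and `|F| ≤ ε`. Integrating by parts against `1 / g`,
`∫ (g - S') / g = F(x) / g(x) - F(x₀) / g(x₀) + ∫ g' F / g²`; the two boundary terms are at most
`ε / c₀` each and the integrand of the last term is at most `c₂ ε / c₀²`. -/

theorem hasDerivWithinAt_integral_Icc {E : Type*} [NormedAddCommGroup E] [NormedSpace ℝ E]
    [CompleteSpace E] {f : ℝ → E} {a b x : ℝ} (hf : ContinuousOn f (Icc a b))
    (hx : x ∈ Icc a b) :
    HasDerivWithinAt (fun u => ∫ t in a..u, f t) (f x) (Icc a b) x := by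
  have := Fact.mk hx
  exact intervalIntegral.integral_hasDerivWithinAt_right
    ((hf.mono (Icc_subset_Icc_right hx.2)).intervalIntegrable_of_Icc hx.1)
    (hf.stronglyMeasurableAtFilter_nhdsWithin measurableSet_Icc x) (hf x hx)

theorem integral_deriv_div_eq {F F' g g' : ℝ → ℝ} {a b : ℝ}
    (hF : ∀ x ∈ [[a, b]], HasDerivWithinAt F (F' x) [[a, b]] x)
    (hg : ∀ x ∈ [[a, b]], HasDerivWithinAt g (g' x) [[a, b]] x)
    (hg₀ : ∀ x ∈ [[a, b]], g x ≠ 0)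
    (hF' : IntervalIntegrable F' volume a b) (hg' : IntervalIntegrable g' volume a b) :
    ∫ x in a..b, F' x / g x = F b / g b - F a / g a + ∫ x in a..b, g' x / g x ^ 2 * F x := by
  have hgc : ContinuousOn g [[a, b]] := fun x hx => (hg x hx).continuousWithinAt
  have hinv' : IntervalIntegrable (fun x => -g' x / g x ^ 2) volume a b := by
    simpa only [Pi.neg_apply, Pi.pow_apply, Pi.inv_apply, div_eq_mul_inv] using
      hg'.neg.mul_continuousOn ((hgc.pow 2).inv₀ fun x hx => pow_ne_zero 2 (hg₀ x hx))
  have ibp := intervalIntegral.integral_mul_deriv_eq_deriv_mul_of_hasDerivWithinAt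
    (fun x hx => (hg x hx).inv (hg₀ x hx)) hF hinv' hF'
  simpa only [Pi.inv_apply, ← div_eq_inv_mul, neg_div, neg_mul, intervalIntegral.integral_neg,
    sub_neg_eq_add] using ibp

theorem abs_integral_deriv_div_le {F F' g g' : ℝ → ℝ} {a b c₀ c₂ ε : ℝ} (hab : a ≤ b)
    (hc₀ : 0 < c₀)
    (hF : ∀ x ∈ Icc a b, HasDerivWithinAt F (F' x) (Icc a b) x)
    (hg : ∀ x ∈ Icc a b, HasDerivWithinAt g (g' x) (Icc a b) x)
    (hF' : IntervalIntegrable F' volume a b) (hg' : IntervalIntegrable g' volume a b)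
    (hglb : ∀ x ∈ Icc a b, c₀ ≤ g x) (hg'b : ∀ x ∈ Icc a b, |g' x| ≤ c₂)
    (hFb : ∀ x ∈ Icc a b, |F x| ≤ ε) :
    |∫ x in a..b, F' x / g x| ≤ (2 / c₀ + c₂ * (b - a) / c₀ ^ 2) * ε := by
  have hg₀ : ∀ x ∈ Icc a b, 0 < g x := fun x hx => hc₀.trans_le (hglb x hx)
  have ha : a ∈ Icc a b := left_mem_Icc.2 hab
  have hε : 0 ≤ ε := (abs_nonneg _).trans (hFb a ha)
  have hc₂ : 0 ≤ c₂ := (abs_nonneg _).trans (hg'b a ha)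
  have hboundary : ∀ x ∈ Icc a b, |F x / g x| ≤ ε / c₀ := fun x hx => by
    rw [abs_div, abs_of_pos (hg₀ x hx)]
    exact div_le_div₀ hε (hFb x hx) hc₀ (hglb x hx)
  have hkernel : ∀ x ∈ Ι a b, ‖g' x / g x ^ 2 * F x‖ ≤ c₂ / c₀ ^ 2 * ε := fun x hx => by
    have hx : x ∈ Icc a b := Ioc_subset_Icc_self (uIoc_of_le hab ▸ hx)
    rw [Real.norm_eq_abs, abs_mul, abs_div, abs_of_pos (pow_pos (hg₀ x hx) 2)]
    gcongr
    exacts [hg'b x hx, hglb x hx, hFb x hx]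
  have hint := intervalIntegral.norm_integral_le_of_norm_le_const hkernel
  rw [Real.norm_eq_abs, abs_of_nonneg (sub_nonneg.2 hab)] at hint
  rw [← uIcc_of_le hab] at hF hg hg₀
  rw [integral_deriv_div_eq hF hg (fun x hx => (hg₀ x hx).ne') hF' hg']
  calc _ ≤ |F b / g b| + |F a / g a| + |∫ x in a..b, g' x / g x ^ 2 * F x| :=
        (abs_add_le _ _).trans (add_le_add_left (abs_sub _ _) _)
    _ ≤ ε / c₀ + ε / c₀ + c₂ / c₀ ^ 2 * ε * (b - a) := by
        gcongr
        exacts [hboundary b (right_mem_Icc.2 hab), hboundary a ha]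
    _ = (2 / c₀ + c₂ * (b - a) / c₀ ^ 2) * ε := by ring

theorem stmt_10_general
    (x₀ x₁ : ℝ) (c₀ c₂ : ℝ) (hc₀ : 0 < c₀)
    (g g' S S' : ℝ → ℝ)
    (hg : ∀ x ∈ Icc x₀ x₁, HasDerivWithinAt g (g' x) (Icc x₀ x₁) x)
    (hg'c : ContinuousOn g' (Icc x₀ x₁))
    (hglb : ∀ x ∈ Icc x₀ x₁, c₀ ≤ g x)
    (hg'b : ∀ x ∈ Icc x₀ x₁, |g' x| ≤ c₂)
    (hS : ∀ x ∈ Icc x₀ x₁, HasDerivWithinAt S (S' x) (Icc x₀ x₁) x)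
    (hS'c : ContinuousOn S' (Icc x₀ x₁))
    (ε : ℝ)
    (hε : ∀ x ∈ Icc x₀ x₁, |(∫ u in x₀..x, g u) - S x| ≤ ε) :
    ∀ x ∈ Icc x₀ x₁,
      |∫ u in x₀..x, (g u - S' u) / g u| ≤ (2 / c₀ + c₂ * (x₁ - x₀) / c₀ ^ 2) * ε := by
  intro x hx
  have hsub : Icc x₀ x ⊆ Icc x₀ x₁ := Icc_subset_Icc_right hx.2
  have hgc : ContinuousOn g (Icc x₀ x₁) := fun y hy => (hg y hy).continuousWithinAt
  have hG : ∀ y ∈ Icc x₀ x, HasDerivWithinAt (fun u => (∫ t in x₀..u, g t) - S u)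
      (g y - S' y) (Icc x₀ x) y := fun y hy =>
    ((hasDerivWithinAt_integral_Icc hgc (hsub hy)).sub (hS y (hsub hy))).mono hsub
  have hx₀ : x₀ ∈ Icc x₀ x₁ := left_mem_Icc.2 (hx.1.trans hx.2)
  have hε₀ : 0 ≤ ε := (abs_nonneg _).trans (hε x₀ hx₀)
  have hc₂ : 0 ≤ c₂ := (abs_nonneg _).trans (hg'b x₀ hx₀)
  calc _ ≤ (2 / c₀ + c₂ * (x - x₀) / c₀ ^ 2) * ε :=
        abs_integral_deriv_div_le hx.1 hc₀ hG (fun y hy => (hg y (hsub hy)).mono hsub)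
          (((hgc.sub hS'c).mono hsub).intervalIntegrable_of_Icc hx.1)
          ((hg'c.mono hsub).intervalIntegrable_of_Icc hx.1)
          (fun y hy => hglb y (hsub hy)) (fun y hy => hg'b y (hsub hy))
          (fun y hy => hε y (hsub hy))
    _ ≤ (2 / c₀ + c₂ * (x₁ - x₀) / c₀ ^ 2) * ε := by gcongr; exact hx.2

/-- Integration-by-parts reduction in Lemma A.2: if `G(x) = ∫_{x₀}^x g` is uniformly
`ε`-approximated by `S`, with `g ≥ c₀ > 0` and `|g'| ≤ c₂`, then
`|∫_{x₀}^x (g - S')/g du| ≤ (2/c₀ + c₂(x₁-x₀)/c₀²) ε` on `[x₀, x₁]`. -/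
theorem stmt_10
    (x₀ x₁ : ℝ) (hx : x₀ < x₁) (c₀ c₂ : ℝ) (hc₀ : 0 < c₀) (hc₂ : 0 ≤ c₂)
    (g g' S S' : ℝ → ℝ)
    (hg : ∀ x ∈ Icc x₀ x₁, HasDerivWithinAt g (g' x) (Icc x₀ x₁) x)
    (hg'c : ContinuousOn g' (Icc x₀ x₁))
    (hglb : ∀ x ∈ Icc x₀ x₁, c₀ ≤ g x)
    (hg'b : ∀ x ∈ Icc x₀ x₁, |g' x| ≤ c₂)
    (hS : ∀ x ∈ Icc x₀ x₁, HasDerivWithinAt S (S' x) (Icc x₀ x₁) x)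
    (hS'c : ContinuousOn S' (Icc x₀ x₁))
    (ε : ℝ)
    (hε : ∀ x ∈ Icc x₀ x₁, |(∫ u in x₀..x, g u) - S x| ≤ ε) :
    ∀ x ∈ Icc x₀ x₁,
      |∫ u in x₀..x, (g u - S' u) / g u| ≤ (2 / c₀ + c₂ * (x₁ - x₀) / c₀ ^ 2) * ε :=
  stmt_10_general x₀ x₁ c₀ c₂ hc₀ g g' S S' hg hg'c hglb hg'b hS hS'c ε hε
end

section
/- Fix δ ∈ (0, 1/2) and constants 0 < c₀ ≤ c₁ < ∞. Let J be an interval and g : J → ℝ continuous with c₀ ≤ g ≤ c₁ on J. Let X, Y : [δ, 1−δ] → J be continuously differentiable with X′(t) = g(X(t)) and Y′(t) = g(Y(t)) for all t ∈ [δ,1−δ], and initial values X(δ) = a, Y(δ) = b. Then sup_{t ∈ [δ,1−δ]} |X(t) − Y(t)| ≤ (c₁ / c₀) · |a − b|. -/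
open MeasureTheory Set

/-- Lipschitz dependence on the initial value (equation (4.12)): if `X' = g ∘ X` and
`Y' = g ∘ Y` on `[δ, 1-δ]` with `c₀ ≤ g ≤ c₁`, `X(δ) = a`, `Y(δ) = b`, then
`sup_t |X(t) - Y(t)| ≤ (c₁/c₀) |a - b|`. -/
theorem stmt_14
    (δ : ℝ) (hδ : δ ∈ Ioo (0:ℝ) (1/2)) (c₀ c₁ : ℝ) (hc₀ : 0 < c₀) (hc : c₀ ≤ c₁)
    (J : Set ℝ) (hJ : J.OrdConnected)
    (g : ℝ → ℝ) (hg : ContinuousOn g J)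
    (hglb : ∀ x ∈ J, c₀ ≤ g x) (hgub : ∀ x ∈ J, g x ≤ c₁)
    (X Y : ℝ → ℝ)
    (hXmap : ∀ t ∈ Icc δ (1 - δ), X t ∈ J) (hYmap : ∀ t ∈ Icc δ (1 - δ), Y t ∈ J)
    (hX : ∀ t ∈ Icc δ (1 - δ), HasDerivWithinAt X (g (X t)) (Icc δ (1 - δ)) t)
    (hY : ∀ t ∈ Icc δ (1 - δ), HasDerivWithinAt Y (g (Y t)) (Icc δ (1 - δ)) t)
    (a b : ℝ) (hXδ : X δ = a) (hYδ : Y δ = b) :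
    ∀ t ∈ Icc δ (1 - δ), |X t - Y t| ≤ (c₁ / c₀) * |a - b| := by
  obtain ⟨hδ0, hδhalf⟩ := hδ
  have hc₁ : (0:ℝ) < c₁ := lt_of_lt_of_le hc₀ hc
  have hδle : δ ≤ 1 - δ := by linarith
  have hδK : δ ∈ Icc δ (1 - δ) := ⟨le_refl δ, hδle⟩
  have hXc : ContinuousOn X (Icc δ (1 - δ)) := fun t ht => (hX t ht).continuousWithinAt
  have hYc : ContinuousOn Y (Icc δ (1 - δ)) := fun t ht => (hY t ht).continuousWithinAt
  -- the compact set of values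
  set S : Set ℝ := X '' Icc δ (1 - δ) ∪ Y '' Icc δ (1 - δ) with hS
  have hScomp : IsCompact S :=
    (isCompact_Icc.image_of_continuousOn hXc).union (isCompact_Icc.image_of_continuousOn hYc)
  have hSne : S.Nonempty := ⟨X δ, Or.inl ⟨δ, hδK, rfl⟩⟩
  obtain ⟨m, hmS, hmlb⟩ := hScomp.exists_isLeast hSne
  obtain ⟨M, hMS, hMub⟩ := hScomp.exists_isGreatest hSne
  have hSJ : S ⊆ J := by
    rintro x (⟨t, ht, rfl⟩ | ⟨t, ht, rfl⟩)
    · exact hXmap t ht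
    · exact hYmap t ht
  have hIJ : Icc m M ⊆ J := hJ.out (hSJ hmS) (hSJ hMS)
  have hSI : S ⊆ Icc m M := fun x hx => ⟨hmlb hx, hMub hx⟩
  have hXmI : ∀ t ∈ Icc δ (1 - δ), X t ∈ Icc m M := fun t ht => hSI (Or.inl ⟨t, ht, rfl⟩)
  have hYmI : ∀ t ∈ Icc δ (1 - δ), Y t ∈ Icc m M := fun t ht => hSI (Or.inr ⟨t, ht, rfl⟩)
  have haI : a ∈ Icc m M := hXδ ▸ hXmI δ hδK
  have hbI : b ∈ Icc m M := hYδ ▸ hYmI δ hδK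
  have hgpos : ∀ x ∈ Icc m M, 0 < g x := fun x hx => lt_of_lt_of_le hc₀ (hglb x (hIJ hx))
  -- the function G
  have hfc : ContinuousOn (fun u => (g u)⁻¹) (Icc m M) :=
    (hg.mono hIJ).inv₀ (fun x hx => (hgpos x hx).ne')
  set G : ℝ → ℝ := fun x => ∫ u in a..x, (g u)⁻¹ with hGdef
  have hint : ∀ x ∈ Icc m M, IntervalIntegrable (fun u => (g u)⁻¹) volume a x := by
    intro x hx
    exact (hfc.mono (ordConnected_Icc.uIcc_subset haI hx)).intervalIntegrable
  have hG : ∀ x ∈ Icc m M, HasDerivWithinAt G ((g x)⁻¹) (Icc m M) x := by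
    intro x hx
    haveI : Fact (x ∈ Icc m M) := ⟨hx⟩
    exact intervalIntegral.integral_hasDerivWithinAt_right (hint x hx)
      (hfc.stronglyMeasurableAtFilter_nhdsWithin measurableSet_Icc x) (hfc x hx)
  have hGc : ContinuousOn G (Icc m M) := fun x hx => (hG x hx).continuousWithinAt
  -- key: G ∘ Z - t is constant on [δ, 1-δ]
  have key : ∀ (Z : ℝ → ℝ), (∀ t ∈ Icc δ (1 - δ), Z t ∈ Icc m M) →
      (∀ t ∈ Icc δ (1 - δ), HasDerivWithinAt Z (g (Z t)) (Icc δ (1 - δ)) t) →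
      ∀ t ∈ Icc δ (1 - δ), G (Z t) - t = G (Z δ) - δ := by
    intro Z hZm hZd
    have hZc : ContinuousOn Z (Icc δ (1 - δ)) := fun t ht => (hZd t ht).continuousWithinAt
    have hcont : ContinuousOn (fun t => G (Z t) - t) (Icc δ (1 - δ)) :=
      (hGc.comp hZc hZm).sub continuousOn_id
    have hderiv : ∀ t ∈ Ico δ (1 - δ),
        HasDerivWithinAt (fun s => G (Z s) - s) 0 (Ici t) t := by
      intro t ht
      have ht' : t ∈ Icc δ (1 - δ) := ⟨ht.1, le_of_lt ht.2⟩
      have hsub : Icc t (1 - δ) ⊆ Icc δ (1 - δ) := fun u hu => ⟨le_trans ht.1 hu.1, hu.2⟩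
      have h1 : HasDerivWithinAt Z (g (Z t)) (Icc t (1 - δ)) t := (hZd t ht').mono hsub
      have h2 : HasDerivWithinAt G ((g (Z t))⁻¹) (Icc m M) (Z t) := hG (Z t) (hZm t ht')
      have h3 : HasDerivWithinAt (fun s => G (Z s)) ((g (Z t))⁻¹ * g (Z t))
          (Icc t (1 - δ)) t := h2.comp t h1 (fun u hu => hZm u (hsub hu))
      rw [inv_mul_cancel₀ (hgpos (Z t) (hZm t ht')).ne'] at h3
      have h4 : HasDerivWithinAt (fun s => G (Z s) - s) (1 - 1) (Icc t (1 - δ)) t :=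
        h3.sub (hasDerivWithinAt_id t _)
      rw [sub_self] at h4
      apply h4.mono_of_mem_nhdsWithin
      have hmem : Iic (1 - δ) ∈ nhdsWithin t (Ici t) :=
        mem_nhdsWithin_of_mem_nhds (Iic_mem_nhds ht.2)
      have : Ici t ∩ Iic (1 - δ) ∈ nhdsWithin t (Ici t) :=
        Filter.inter_mem self_mem_nhdsWithin hmem
      rwa [Ici_inter_Iic] at this
    have := constant_of_has_deriv_right_zero hcont hderiv
    intro t ht
    have h := this t ht
    simpa using h
  -- the bound |G a - G b| ≤ c₀⁻¹ |a - b|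
  have hbound : ∀ x ∈ Icc m M, ‖(g x)⁻¹‖ ≤ c₀⁻¹ := by
    intro x hx
    rw [Real.norm_eq_abs, abs_of_pos (inv_pos.2 (hgpos x hx))]
    exact inv_anti₀ hc₀ (hglb x (hIJ hx))
  have h2 : |G a - G b| ≤ c₀⁻¹ * |a - b| := by
    have := (convex_Icc m M).norm_image_sub_le_of_norm_hasDerivWithin_le hG hbound hbI haI
    simpa [Real.norm_eq_abs] using this
  -- the bound |x - y| ≤ c₁ |G x - G y| on Icc m M
  have hmono : MonotoneOn (fun x => c₁ * G x - x) (Icc m M) := by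
    apply monotoneOn_of_hasDerivWithinAt_nonneg (convex_Icc m M)
      ((hGc.const_smul c₁).sub continuousOn_id)
      (f' := fun x => c₁ * (g x)⁻¹ - 1)
    · intro x hx
      have hx' := interior_subset hx
      exact (((hG x hx').const_mul c₁).sub (hasDerivWithinAt_id x _)).mono interior_subset
    · intro x hx
      have hx' := interior_subset hx
      have hgx := hgpos x hx'
      have h1 : (1:ℝ) ≤ c₁ * (g x)⁻¹ := by
        rw [← mul_inv_cancel₀ hgx.ne']
        exact mul_le_mul_of_nonneg_right (hgub x (hIJ hx')) (inv_nonneg.2 hgx.le)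
      linarith
  have h3 : ∀ x ∈ Icc m M, ∀ y ∈ Icc m M, |x - y| ≤ c₁ * |G x - G y| := by
    have main : ∀ x ∈ Icc m M, ∀ y ∈ Icc m M, x ≤ y → |x - y| ≤ c₁ * |G x - G y| := by
      intro x hx y hy hxy
      have h5 := hmono hx hy hxy
      simp only at h5
      have h6 : y - x ≤ c₁ * (G y - G x) := by ring_nf; ring_nf at h5; linarith
      have h7 : 0 ≤ G y - G x := by nlinarith
      rw [abs_sub_comm x y, abs_sub_comm (G x) (G y),
        abs_of_nonneg (by linarith : (0:ℝ) ≤ y - x), abs_of_nonneg h7]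
      exact h6
    intro x hx y hy
    rcases le_total x y with h | h
    · exact main x hx y hy h
    · rw [abs_sub_comm x y, abs_sub_comm (G x) (G y)]
      exact main y hy x hx h
  -- conclusion
  intro t ht
  have hXt := key X hXmI hX t ht
  have hYt := key Y hYmI hY t ht
  have hGdiff : G (X t) - G (Y t) = G a - G b := by
    rw [hXδ] at hXt; rw [hYδ] at hYt; linarith
  calc |X t - Y t| ≤ c₁ * |G (X t) - G (Y t)| := h3 _ (hXmI t ht) _ (hYmI t ht)
    _ = c₁ * |G a - G b| := by rw [hGdiff]
    _ ≤ c₁ * (c₀⁻¹ * |a - b|) := mul_le_mul_of_nonneg_left h2 hc₁.le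
    _ = (c₁ / c₀) * |a - b| := by field_simp
end
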